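/- arXiv:1911.03683 — 6 statements merged into one kernel-verified Lean document; each statement's English description precedes it below -/
import Mathlib

section
/- Let G be a graph and X an independent set of vertices in G all having the same neighborhood, with |X| ≥ 2. Let x ∈ X and G' = G - x. If there is a set A of at most |X| - 3 vertex pairs (edge edits) such that G' Δ A is paw-free, then for the same A, G Δ A is paw-free. -/
/-!
Suppose `G Δ A` has an induced paw `f` through `x = f i`. No edit touches `x`, so a twin
`y ∈ X \ {x}` joined by no edit to a vertex of the paw sees the other three paw vertices exactly
as `x` does; it is not itself a paw vertex either, since the paw has no twins and an edit would
have to separate `x` from `y`. Replacing `x` by `y` gives an induced paw avoiding `x`.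

Such a `y` exists by counting the bad twins `y ≠ x`, those joined by an edit to a vertex of the
paw (which includes every twin lying on the paw). The bad twins lying on the paw are
non-neighbours of `i` there, so there are at most two of them, and two of them are adjacent in
the paw but not in `G`: they share one edit. Every other bad twin has an edit of its own. Hence
at most `|A| + 1 ≤ |X| - 2` twins besides `x` are bad, and none if `A = ∅`.
-/

open SimpleGraph

/-- The paw: triangle 0,1,2 plus pendant vertex 3 attached at 2. -/
def paw : SimpleGraph (Fin 4) :=
  SimpleGraph.fromEdgeSet {s(0,1), s(0,2), s(1,2), s(2,3)}

/-- `G` contains an induced copy of the paw. -/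
def HasInducedPaw {V : Type*} (G : SimpleGraph V) : Prop :=
  ∃ f : Fin 4 ↪ V, ∀ a b : Fin 4, paw.Adj a b ↔ G.Adj (f a) (f b)

def PawFree {V : Type*} (G : SimpleGraph V) : Prop := ¬ HasInducedPaw G

/-- `G` is complete multipartite with parts given as the fibers of `part`:
two vertices are adjacent iff they lie in different parts. -/
def IsCMWith {V ι : Type*} (G : SimpleGraph V) (part : V → ι) : Prop :=
  ∀ u v : V, G.Adj u v ↔ part u ≠ part v

/-- `G` is complete multipartite. -/
def IsCM {V : Type*} (G : SimpleGraph V) : Prop :=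
  ∃ part : V → V, IsCMWith G part

/-- `G` is complete multipartite with at least three parts. -/
def IsCM3 {V : Type*} (G : SimpleGraph V) : Prop :=
  ∃ part : V → V, IsCMWith G part ∧
    ∃ u v w : V, part u ≠ part v ∧ part u ≠ part w ∧ part v ≠ part w

/-- The graph `G Δ A`: edge set is the symmetric difference of `E(G)` and `A`. -/
def edit {V : Type*} (G : SimpleGraph V) (A : Finset (Sym2 V)) : SimpleGraph V :=
  SimpleGraph.fromEdgeSet (symmDiff G.edgeSet (A : Set (Sym2 V)))

instance : DecidableRel paw.Adj := by unfold paw; infer_instance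

lemma paw_eq_of_forall_adj_iff :
    ∀ i j : Fin 4, (∀ k, paw.Adj i k ↔ paw.Adj j k) → i = j := by
  decide

lemma paw_compl_degree_le_two : ∀ i : Fin 4, pawᶜ.degree i ≤ 2 := by decide

lemma paw_adj_of_compl_adj :
    ∀ i j k : Fin 4, pawᶜ.Adj i j → pawᶜ.Adj i k → j ≠ k → paw.Adj j k := by
  decide

section Edit

variable {V : Type*} {G : SimpleGraph V} {A : Finset (Sym2 V)} {u v : V}

lemma edit_adj_iff_of_notMem (h : s(u, v) ∉ A) : (edit G A).Adj u v ↔ G.Adj u v := by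
  simp only [edit, fromEdgeSet_adj, Set.mem_symmDiff, mem_edgeSet, Finset.mem_coe, h]
  exact ⟨fun h' => h'.1.elim (·.1) (·.1.elim),
    fun h' => ⟨.inl ⟨h', not_false⟩, h'.ne⟩⟩

lemma mem_of_not_edit_adj_iff (h : ¬((edit G A).Adj u v ↔ G.Adj u v)) : s(u, v) ∈ A :=
  not_not.mp (mt edit_adj_iff_of_notMem h)

end Edit

lemma hasInducedPaw_induce_of_forall_mem {V : Type*} {H : SimpleGraph V} {s : Set V}
    {f : Fin 4 ↪ V}
    (hf : ∀ a b, paw.Adj a b ↔ H.Adj (f a) (f b)) (hs : ∀ a, f a ∈ s) :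
    HasInducedPaw (H.induce s) :=
  ⟨⟨fun a => ⟨f a, hs a⟩, fun _ _ h => f.injective (congrArg Subtype.val h)⟩, hf⟩

section InducedCopy

variable {W V : Type*} {P : SimpleGraph W} {f : W ↪ V}

lemma injective_update_of_forall_ne [DecidableEq W] {i : W} {y : V} (hy : ∀ j ≠ i, y ≠ f j) :
    Function.Injective (Function.update f i y) := by
  intro a b hab
  by_cases ha : a = i <;> by_cases hb : b = i
  · exact ha.trans hb.symm
  · subst ha
    rw [Function.update_self, Function.update_of_ne hb] at hab
    exact absurd hab (hy b hb)
  · subst hb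
    rw [Function.update_self, Function.update_of_ne ha] at hab
    exact absurd hab.symm (hy a ha)
  · rw [Function.update_of_ne ha, Function.update_of_ne hb] at hab
    exact f.injective hab

lemma adj_iff_update_of_adj_iff [DecidableEq W] {H : SimpleGraph V}
    (hf : ∀ a b, P.Adj a b ↔ H.Adj (f a) (f b)) {i : W} {y : V}
    (hy : ∀ j ≠ i, H.Adj y (f j) ↔ H.Adj (f i) (f j)) (a b : W) :
    P.Adj a b ↔ H.Adj (Function.update f i y a) (Function.update f i y b) := by
  by_cases ha : a = i <;> by_cases hb : b = i
  · simp [ha, hb]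
  · rw [ha, Function.update_self, Function.update_of_ne hb, hy b hb, hf]
  · rw [hb, Function.update_self, Function.update_of_ne ha, H.adj_comm, hy a ha, hf]
    exact H.adj_comm _ _
  · rw [Function.update_of_ne ha, Function.update_of_ne hb, hf]

lemma exists_mem_edits_of_adj_iff {G : SimpleGraph V} {A : Finset (Sym2 V)}
    (hf : ∀ a b, P.Adj a b ↔ (edit G A).Adj (f a) (f b)) {i j : W}
    (hP : ¬∀ k, P.Adj i k ↔ P.Adj j k) (hG : ∀ v, G.Adj (f i) v ↔ G.Adj (f j) v) :
    ∃ k, s(f i, f k) ∈ A ∨ s(f j, f k) ∈ A := by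
  obtain ⟨k, hk⟩ := not_forall.mp hP
  refine ⟨k, ?_⟩
  by_contra h
  rw [not_or] at h
  apply hk
  rw [hf, hf, edit_adj_iff_of_notMem h.1, edit_adj_iff_of_notMem h.2, hG]

lemma compl_adj_of_not_adj {G : SimpleGraph V} {A : Finset (Sym2 V)}
    (hf : ∀ a b, P.Adj a b ↔ (edit G A).Adj (f a) (f b)) {i j : W}
    (hA : ∀ v, s(f i, v) ∉ A) (hG : ¬G.Adj (f i) (f j)) (hij : i ≠ j) : Pᶜ.Adj i j := by
  rw [compl_adj, hf, edit_adj_iff_of_notMem (hA _)]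
  exact ⟨hij, hG⟩

end InducedCopy

lemma card_le_card_add_one_of_forall_exists_mem {V : Type*} [DecidableEq V] {T R : Finset V}
    {A : Finset (Sym2 V)} (hT : ∀ y ∈ T, ∃ r ∈ R, s(y, r) ∈ A)
    (hTR : (T ∩ R).card ≤ 2)
    (hA : ∀ a ∈ T ∩ R, ∀ b ∈ T ∩ R, a ≠ b → s(a, b) ∈ A) :
    T.card ≤ A.card + 1 := by
  choose! r hrR hrA using hT
  set Q := T.filter (· ∉ R)
  have hsplit : (T ∩ R).card + Q.card = T.card := by
    rw [← Finset.filter_mem_eq_inter]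
    exact Finset.card_filter_add_card_filter_not _
  have hQT : ∀ y ∈ Q, y ∈ T ∧ y ∉ R := fun y hy => Finset.mem_filter.mp hy
  have hQ_inj : Set.InjOn (fun y => s(y, r y)) Q := by
    intro y hy y' hy' h
    rcases Sym2.eq_iff.mp h with ⟨h1, -⟩ | ⟨h1, -⟩
    · exact h1
    · exact absurd (h1 ▸ hrR y' (hQT y' hy').1) (hQT y hy).2
  rcases Nat.lt_or_ge (T ∩ R).card 2 with h1 | h2
  · have : Q.card ≤ A.card :=
      Finset.card_le_card_of_injOn _ (fun y hy => hrA y (hQT y hy).1) hQ_inj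
    omega
  · obtain ⟨a, ha, b, hb, hab⟩ := Finset.one_lt_card.mp h2
    have hmaps : Set.MapsTo (fun y => s(y, r y)) Q (A.erase s(a, b)) := by
      intro y hy
      refine Finset.mem_erase.mpr ⟨fun h => (hQT y hy).2 ?_, hrA y (hQT y hy).1⟩
      rcases Sym2.eq_iff.mp h with ⟨rfl, -⟩ | ⟨rfl, -⟩
      exacts [(Finset.mem_inter.mp ha).2, (Finset.mem_inter.mp hb).2]
    have : Q.card ≤ (A.erase s(a, b)).card := Finset.card_le_card_of_injOn _ hmaps hQ_inj
    have := Finset.card_erase_add_one (hA a ha b hb hab)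
    omega

lemma exists_mem_erase_forall_notMem_edits {V : Type*} [DecidableEq V] {G : SimpleGraph V}
    {A : Finset (Sym2 V)} {X : Finset V} {f : Fin 4 ↪ V} {i : Fin 4}
    (hf : ∀ a b, paw.Adj a b ↔ (edit G A).Adj (f a) (f b)) (hi : f i ∈ X) (hX2 : 2 ≤ X.card)
    (hindep : ∀ a ∈ X, ∀ b ∈ X, a ≠ b → ¬G.Adj a b) (hA : A.card ≤ X.card - 3)
    (hAi : ∀ v, s(f i, v) ∉ A) :
    ∃ y ∈ X.erase (f i), ∀ k, s(y, f k) ∉ A := by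
  set T := (X.erase (f i)).filter (fun y => ∃ k, s(y, f k) ∈ A)
  set R := Finset.univ.map f
  have hTX : ∀ y ∈ T ∩ R, y ∈ X.erase (f i) := fun y hy =>
    (Finset.mem_filter.mp (Finset.mem_inter.mp hy).1).1
  have hcompl : ∀ y ∈ T ∩ R, ∃ j, pawᶜ.Adj i j ∧ f j = y := by
    intro y hy
    obtain ⟨hne, hjX⟩ := Finset.mem_erase.mp (hTX y hy)
    obtain ⟨j, -, rfl⟩ := Finset.mem_map.mp (Finset.mem_inter.mp hy).2
    exact ⟨j, compl_adj_of_not_adj hf hAi (hindep _ hi _ hjX hne.symm)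
      (fun h => hne (congrArg f h).symm), rfl⟩
  have hTR : (T ∩ R).card ≤ 2 := by
    calc (T ∩ R).card ≤ ((pawᶜ.neighborFinset i).map f).card := by
          refine Finset.card_le_card fun y hy => ?_
          obtain ⟨j, hj, rfl⟩ := hcompl y hy
          exact Finset.mem_map_of_mem f ((mem_neighborFinset _ _ _).mpr hj)
      _ ≤ 2 := (Finset.card_map f).trans_le (paw_compl_degree_le_two i)
  have hclique : ∀ a ∈ T ∩ R, ∀ b ∈ T ∩ R, a ≠ b → s(a, b) ∈ A := by
    intro a ha b hb hab
    obtain ⟨j, hj, rfl⟩ := hcompl a ha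
    obtain ⟨k, hk, rfl⟩ := hcompl b hb
    refine mem_of_not_edit_adj_iff (G := G) fun h => hindep _ (Finset.mem_of_mem_erase (hTX _ ha))
      _ (Finset.mem_of_mem_erase (hTX _ hb)) hab ?_
    exact h.mp ((hf j k).mp (paw_adj_of_compl_adj i j k hj hk fun h => hab (congrArg f h)))
  have hT : ∀ y ∈ T, ∃ r ∈ R, s(y, r) ∈ A := by
    intro y hy
    obtain ⟨k, hk⟩ := (Finset.mem_filter.mp hy).2
    exact ⟨f k, Finset.mem_map_of_mem f (Finset.mem_univ k), hk⟩
  have hlt : T.card < (X.erase (f i)).card := by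
    rw [Finset.card_erase_of_mem hi]
    rcases A.eq_empty_or_nonempty with rfl | hne
    · have : T = ∅ := Finset.filter_false_of_mem fun y _ => by simp
      simp only [this, Finset.card_empty]
      omega
    · have := card_le_card_add_one_of_forall_exists_mem hT hTR hclique
      have := hne.card_pos
      omega
  obtain ⟨y, hy, hyT⟩ := Finset.exists_mem_notMem_of_card_lt_card hlt
  exact ⟨y, hy, fun k hk => hyT (Finset.mem_filter.mpr ⟨hy, k, hk⟩)⟩

/-- Safeness of the false-twin rule: if `X` is an independent set of false twins,
`x ∈ X`, and `A` is a set of at most `|X| - 3` edits avoiding `x` such that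
`(G - x) Δ A` is paw-free, then `G Δ A` is paw-free. -/
theorem statement_1 {V : Type*} (G : SimpleGraph V) (X : Finset V) (x : V)
    (hx : x ∈ X) (hX2 : 2 ≤ X.card)
    (hindep : ∀ a ∈ X, ∀ b ∈ X, a ≠ b → ¬ G.Adj a b)
    (htwin : ∀ a ∈ X, ∀ b ∈ X, G.neighborSet a = G.neighborSet b)
    (A : Finset (Sym2 V)) (hA : A.card ≤ X.card - 3)
    (hAx : ∀ e ∈ A, x ∉ e)
    (hsol : PawFree ((edit G A).induce {v : V | v ≠ x})) :
    PawFree (edit G A) := by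
  classical
  rintro ⟨f, hf⟩
  have hxA : ∀ v, s(x, v) ∉ A := fun v hv => hAx _ hv (Sym2.mem_mk_left x v)
  by_cases hxf : ∃ i, f i = x
  swap
  · exact hsol (hasInducedPaw_induce_of_forall_mem hf fun a h => hxf ⟨a, h⟩)
  obtain ⟨i, rfl⟩ := hxf
  obtain ⟨y, hy, hyA⟩ := exists_mem_erase_forall_notMem_edits hf hx hX2 hindep hA hxA
  have hGy : ∀ v, G.Adj (f i) v ↔ G.Adj y v := fun v => by
    rw [← mem_neighborSet, htwin _ hx _ (Finset.mem_of_mem_erase hy), mem_neighborSet]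
  have hyf : ∀ j ≠ i, y ≠ f j := by
    rintro j hj rfl
    obtain ⟨k, hk | hk⟩ := exists_mem_edits_of_adj_iff hf
      (fun h => hj (paw_eq_of_forall_adj_iff i j h).symm) hGy
    exacts [hxA _ hk, hyA k hk]
  have hHy : ∀ j ≠ i, (edit G A).Adj y (f j) ↔ (edit G A).Adj (f i) (f j) := fun j _ => by
    rw [edit_adj_iff_of_notMem (hyA j), edit_adj_iff_of_notMem (hxA _), hGy]
  refine hsol (hasInducedPaw_induce_of_forall_mem (f := ⟨_, injective_update_of_forall_ne hyf⟩)
    (adj_iff_update_of_adj_iff hf hHy) fun a => ?_)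
  by_cases ha : a = i
  · subst ha
    simpa using Finset.ne_of_mem_erase hy
  · simpa [Function.update_of_ne ha] using f.injective.ne ha
end

section
/- Let G be a graph, S ⊆ V(G) such that G contains no induced paw all of whose edges avoid having both endpoints in S (i.e., every induced paw of G has an edge with both endpoints in S). Then every vertex s ∈ S is adjacent to at most one connected component of G - S that is complete multipartite with at least three parts. -/
open SimpleGraph

/-!
Suppose `s` has neighbours `x ∈ C₁` and `y ∈ C₂` in two different components of `G - S`, where
`C₁` is complete multipartite with at least three parts. Then `x` lies in a triangle `x v w`
inside `C₁`, and `y` sees none of `x, v, w`. If `s` is adjacent to `v` (or `w`), then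
`x v s` plus the pendant `y` is an induced paw; otherwise `v w x` plus the pendant `s` is one.
Either way `s` is the only vertex of the paw that may lie in `S`, so no edge of it lies in `S`.
-/

def IsInducedPaw {V : Type*} (G : SimpleGraph V) (f : Fin 4 → V) : Prop :=
  ∀ a b : Fin 4, paw.Adj a b ↔ G.Adj (f a) (f b)

instance inst_s4 : DecidableRel paw.Adj := fun a b => by
  unfold paw
  simp only [fromEdgeSet_adj]
  infer_instance

section
variable {V : Type*} {G : SimpleGraph V}

/-- No two non-adjacent vertices of the paw have the same neighbourhood. -/
theorem IsInducedPaw.injective {f : Fin 4 → V} (hf : IsInducedPaw G f) : f.Injective := by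
  intro a b hab
  have hnot : ¬ paw.Adj a b := by rw [hf, hab]; exact G.irrefl
  have htwin : ∀ c, paw.Adj a c ↔ paw.Adj b c := fun c => by rw [hf, hf, hab]
  clear hab hf
  revert a b
  decide

theorem isInducedPaw_of_triangle_of_pendant {p q r t : V} (hpq : G.Adj p q) (hpr : G.Adj p r)
    (hqr : G.Adj q r) (hrt : G.Adj r t) (hpt : ¬ G.Adj p t) (hqt : ¬ G.Adj q t) :
    IsInducedPaw G ![p, q, r, t] := by
  intro a b
  fin_cases a <;> fin_cases b <;>
    simp [paw, hpq, hpr, hqr, hrt, hpt, hqt, hpq.symm, hpr.symm, hqr.symm, hrt.symm,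
      G.adj_comm t]

theorem exists_isInducedPaw_of_adj_triangle_of_adj {s x v w y : V} (hxv : G.Adj x v)
    (hxw : G.Adj x w) (hvw : G.Adj v w) (hsx : G.Adj s x) (hsy : G.Adj s y)
    (hxy : ¬ G.Adj x y) (hvy : ¬ G.Adj v y) (hwy : ¬ G.Adj w y) :
    ∃ f : Fin 4 → V, IsInducedPaw G f ∧ ∀ i, f i ∈ ({s, x, v, w, y} : Set V) := by
  by_cases hsv : G.Adj s v
  · exact ⟨_, isInducedPaw_of_triangle_of_pendant hxv hsx.symm hsv.symm hsy hxy hvy,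
      fun i => by fin_cases i <;> simp⟩
  by_cases hsw : G.Adj s w
  · exact ⟨_, isInducedPaw_of_triangle_of_pendant hxw hsx.symm hsw.symm hsy hxy hwy,
      fun i => by fin_cases i <;> simp⟩
  exact ⟨_, isInducedPaw_of_triangle_of_pendant hvw hxv.symm hxw.symm hsx.symm
      (fun h => hsv h.symm) (fun h => hsw h.symm), fun i => by fin_cases i <;> simp⟩

theorem IsCM3.exists_triangle (hG : IsCM3 G) (x : V) :
    ∃ v w, G.Adj x v ∧ G.Adj x w ∧ G.Adj v w := by
  obtain ⟨part, hpart, u, v, w, huv, huw, hvw⟩ := hG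
  have hadj {a b : V} (hab : part a ≠ part b) : G.Adj a b := (hpart a b).2 hab
  by_cases hxu : part x = part u
  · exact ⟨v, w, hadj (hxu ▸ huv), hadj (hxu ▸ huw), hadj hvw⟩
  by_cases hxv : part x = part v
  · exact ⟨u, w, hadj hxu, hadj (hxv ▸ hvw), hadj huw⟩
  exact ⟨u, v, hadj hxu, hadj hxv, hadj huv⟩

theorem not_adj_of_ne_connectedComponent {S : Set V} {c₁ c₂ : (G.induce Sᶜ).ConnectedComponent}
    (hne : c₁ ≠ c₂) {a b : ↥Sᶜ} (ha : a ∈ c₁.supp) (hb : b ∈ c₂.supp) : ¬ G.Adj a b :=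
  fun hab => hne (ha ▸ hb ▸ ConnectedComponent.connectedComponentMk_eq_of_adj
    (G := G.induce Sᶜ) hab)

end

theorem statement_4_general {V : Type*} (G : SimpleGraph V) (S : Set V)
    (hS : ∀ f : Fin 4 ↪ V, (∀ a b : Fin 4, paw.Adj a b ↔ G.Adj (f a) (f b)) →
      ∃ a b : Fin 4, paw.Adj a b ∧ f a ∈ S ∧ f b ∈ S)
    (s : V)
    (c₁ c₂ : (G.induce Sᶜ).ConnectedComponent)
    (h₁ : IsCM3 ((G.induce Sᶜ).induce c₁.supp))
    (hadj₁ : ∃ v : ↥Sᶜ, v ∈ c₁.supp ∧ G.Adj s ↑v)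
    (hadj₂ : ∃ v : ↥Sᶜ, v ∈ c₂.supp ∧ G.Adj s ↑v) :
    c₁ = c₂ := by
  by_contra hne
  obtain ⟨x, hx, hsx⟩ := hadj₁
  obtain ⟨y, hy, hsy⟩ := hadj₂
  obtain ⟨v, w, hxv, hxw, hvw⟩ : ∃ v w : ↥c₁.supp,
      G.Adj x (v : ↥Sᶜ) ∧ G.Adj x (w : ↥Sᶜ) ∧ G.Adj (v : ↥Sᶜ) (w : ↥Sᶜ) :=
    h₁.exists_triangle ⟨x, hx⟩
  have hcross (z : ↥c₁.supp) : ¬ G.Adj (z : ↥Sᶜ) y := not_adj_of_ne_connectedComponent hne z.2 hy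
  obtain ⟨f, hf, hfS⟩ := exists_isInducedPaw_of_adj_triangle_of_adj hxv hxw hvw hsx hsy
    (hcross ⟨x, hx⟩) (hcross v) (hcross w)
  have hf_mem_S {i : Fin 4} (hi : f i ∈ S) : f i = s := by
    have hout (z : ↥Sᶜ) : (z : V) ∉ S := z.2
    rcases hfS i with h | h | h | h | h <;> first | exact h | exact absurd (h ▸ hi) (hout _)
  obtain ⟨a, b, hab, ha, hb⟩ := hS ⟨f, hf.injective⟩ hf
  exact hab.ne (hf.injective ((hf_mem_S ha).trans (hf_mem_S hb).symm))

/-- If every induced paw of `G` has an edge with both endpoints in `S`, then every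
vertex `s ∈ S` is adjacent to at most one connected component of `G - S` that is
complete multipartite with at least three parts. -/
theorem statement_4 {V : Type*} (G : SimpleGraph V) (S : Set V)
    (hS : ∀ f : Fin 4 ↪ V, (∀ a b : Fin 4, paw.Adj a b ↔ G.Adj (f a) (f b)) →
      ∃ a b : Fin 4, paw.Adj a b ∧ f a ∈ S ∧ f b ∈ S)
    (s : V) (hs : s ∈ S)
    (c₁ c₂ : (G.induce Sᶜ).ConnectedComponent)
    (h₁ : IsCM3 ((G.induce Sᶜ).induce c₁.supp))
    (h₂ : IsCM3 ((G.induce Sᶜ).induce c₂.supp))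
    (hadj₁ : ∃ v : ↥Sᶜ, v ∈ c₁.supp ∧ G.Adj s ↑v)
    (hadj₂ : ∃ v : ↥Sᶜ, v ∈ c₂.supp ∧ G.Adj s ↑v) :
    c₁ = c₂ :=
  statement_4_general G S hS s c₁ c₂ h₁ hadj₁ hadj₂
end

section
/- Let H be a connected paw-free graph containing a triangle. Then H is complete multipartite (with at least three parts). -/
open SimpleGraph

/-!
A vertex adjacent to exactly one vertex of a triangle would span an induced paw, so in a paw-free
graph every neighbour of a triangle sees at least two of its vertices. Hence triangles propagate
along edges, and in a connected graph with one triangle every edge lies in a triangle. Then an edge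
`xz` together with a vertex `y` seeing neither end is impossible: follow a walk from `x` to `y`; if
the next vertex `p` on it misses `y` we recurse on the edge `px`, and otherwise the triangle through
`xz` forces `y` to be adjacent to `x` or `z`. So non-adjacency is transitive, i.e. the graph is
complete multipartite, and the triangle supplies three distinct parts.
-/

namespace PawFree

variable {V : Type*} {G : SimpleGraph V}

theorem adj_of_triangle (hpf : PawFree G) {a b c x : V}
    (hab : G.Adj a b) (hac : G.Adj a c) (hbc : G.Adj b c)
    (hxc : G.Adj x c) (hxa : ¬ G.Adj x a) : G.Adj x b := by
  by_contra hxb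
  have hxa' : x ≠ a := fun h => hxb (h ▸ hab)
  have hxb' : x ≠ b := fun h => hxa (h ▸ hab.symm)
  refine hpf ⟨⟨![a, b, c, x], ?_⟩, ?_⟩
  · intro i j hij
    fin_cases i <;> fin_cases j <;>
      simp_all [hab.ne, hac.ne, hbc.ne, hxc.ne]
  · intro i j
    show paw.Adj i j ↔ G.Adj (![a, b, c, x] i) (![a, b, c, x] j)
    fin_cases i <;> fin_cases j <;>
      simp [paw, hab, hac, hbc, hxc, hxa, hxb, hab.symm, hac.symm, hbc.symm, hxc.symm,
        G.adj_comm a x, G.adj_comm b x]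

theorem exists_common_neighbor (hpf : PawFree G) {v p q x : V}
    (hvp : G.Adj v p) (hvq : G.Adj v q) (hpq : G.Adj p q) (hvx : G.Adj v x) :
    ∃ w, G.Adj v w ∧ G.Adj x w := by
  by_cases hxp : G.Adj x p
  · exact ⟨p, hvp, hxp⟩
  · exact ⟨q, hvq, hpf.adj_of_triangle hpq hvp.symm hvq.symm hvx.symm hxp⟩

theorem exists_triangle_of_walk (hpf : PawFree G) {u v : V} (p : G.Walk u v)
    (hu : ∃ b c, G.Adj u b ∧ G.Adj u c ∧ G.Adj b c) :
    ∃ b c, G.Adj v b ∧ G.Adj v c ∧ G.Adj b c := by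
  induction p with
  | nil => exact hu
  | cons hux _ ih =>
    obtain ⟨b, c, hub, huc, hbc⟩ := hu
    obtain ⟨w, huw, hxw⟩ := hpf.exists_common_neighbor hub huc hbc hux
    exact ih ⟨_, w, hux.symm, hxw, huw⟩

theorem exists_common_neighbor_of_connected (hpf : PawFree G) (hconn : G.Connected)
    (htri : ∃ a b c : V, G.Adj a b ∧ G.Adj a c ∧ G.Adj b c) {u v : V} (huv : G.Adj u v) :
    ∃ w, G.Adj u w ∧ G.Adj v w := by
  obtain ⟨a, htri_a⟩ := htri
  obtain ⟨b, c, hub, huc, hbc⟩ := hpf.exists_triangle_of_walk (hconn a u).some htri_a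
  exact hpf.exists_common_neighbor hub huc hbc huv

theorem not_isPathGraph3Compl_of_walk (hpf : PawFree G)
    (hedge : ∀ u v, G.Adj u v → ∃ w, G.Adj u w ∧ G.Adj v w) {x y : V} (p : G.Walk x y)
    (z : V) : ¬ G.IsPathGraph3Compl y x z := by
  induction p generalizing z with
  | nil => exact fun h => h.ne_fst rfl
  | @cons x u y hxu _ ih =>
    rintro ⟨hxz, hyx, hyz⟩
    by_cases hyu : G.Adj y u
    · obtain ⟨w, hxw, hzw⟩ := hedge x z hxz
      have hyw : G.Adj y w := by
        by_cases huz : G.Adj u z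
        · exact absurd (hpf.adj_of_triangle hxz hxu huz.symm hyu hyx) hyz
        · have huw : G.Adj u w := hpf.adj_of_triangle hzw hxz.symm hxw.symm hxu.symm huz
          exact hpf.adj_of_triangle hxw hxu huw.symm hyu hyx
      exact hyz (hpf.adj_of_triangle hxz hxw hzw hyw hyx)
    · exact ih x ⟨hxu.symm, hyu, hyx⟩

theorem isCompleteMultipartite (hpf : PawFree G) (hconn : G.Connected)
    (htri : ∃ a b c : V, G.Adj a b ∧ G.Adj a c ∧ G.Adj b c) : G.IsCompleteMultipartite := by
  by_contra h
  obtain ⟨y, x, z, h3⟩ := exists_isPathGraph3Compl_of_not_isCompleteMultipartite h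
  exact hpf.not_isPathGraph3Compl_of_walk
    (fun _ _ => hpf.exists_common_neighbor_of_connected hconn htri) (hconn x y).some z h3

end PawFree

namespace SimpleGraph.IsCompleteMultipartite

variable {V : Type*} {G : SimpleGraph V}

theorem isCMWith_out (h : G.IsCompleteMultipartite) :
    IsCMWith G fun v => (Quotient.mk h.setoid v).out := by
  intro u v
  rw [ne_eq, Quotient.out_inj, Quotient.eq]
  exact not_not.symm

theorem isCM3 (h : G.IsCompleteMultipartite)
    (htri : ∃ a b c : V, G.Adj a b ∧ G.Adj a c ∧ G.Adj b c) : IsCM3 G := by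
  obtain ⟨a, b, c, hab, hac, hbc⟩ := htri
  have hcm := h.isCMWith_out
  exact ⟨_, hcm, a, b, c, (hcm a b).1 hab, (hcm a c).1 hac, (hcm b c).1 hbc⟩

end SimpleGraph.IsCompleteMultipartite

/-- A connected paw-free graph containing a triangle is complete multipartite
with at least three parts. -/
theorem statement_7 {V : Type*} (G : SimpleGraph V) (hconn : G.Connected)
    (hpf : PawFree G) (htri : ∃ a b c : V, G.Adj a b ∧ G.Adj a c ∧ G.Adj b c) :
    IsCM3 G :=
  (hpf.isCompleteMultipartite hconn htri).isCM3 htri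
end

section
/- Let G be a graph with no k+3 pairwise non-adjacent vertices sharing a common neighborhood, and let x be a vertex of G with a set T of 4k+6 neighbors of x inducing a triangle-free subgraph of G. Then there is no set A of at most k vertex pairs such that G Δ A is paw-free and x lies in a connected component of G Δ A that is complete multipartite with at least three parts. -/
open SimpleGraph

lemma edit_adj_of_untouched {V : Type*} (G : SimpleGraph V) (A : Finset (Sym2 V))
    {a b : V} (h : ∀ e ∈ A, a ∉ e) : (edit G A).Adj a b ↔ G.Adj a b := by
  have hA : s(a,b) ∉ A := fun hm => h _ hm (Sym2.mem_mk_left a b)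
  constructor
  · rintro ⟨hm, hne⟩
    rcases Set.mem_symmDiff.1 hm with ⟨h1, _⟩ | ⟨h1, _⟩
    · exact h1
    · exact absurd h1 hA
  · intro hadj
    exact ⟨Set.mem_symmDiff.2 (Or.inl ⟨hadj, hA⟩), hadj.ne⟩

/-- If `G` has no `k+3` independent false twins and `x` has at least `4k+6` neighbors
`T` inducing a triangle-free subgraph, then no set of at most `k` edits makes `G`
paw-free while putting `x` in a complete multipartite component with at least
three parts. -/
theorem statement_12 {V : Type*} (G : SimpleGraph V) (k : ℕ)
    (htwinfree : ∀ X : Finset V, k + 3 ≤ X.card →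
      (∀ a ∈ X, ∀ b ∈ X, a ≠ b → ¬ G.Adj a b) →
      (∀ a ∈ X, ∀ b ∈ X, G.neighborSet a = G.neighborSet b) → False)
    (x : V) (T : Finset V) (hT : 4 * k + 6 ≤ T.card)
    (hTnbr : ∀ t ∈ T, G.Adj x t)
    (hTfree : (G.induce (↑T : Set V)).CliqueFree 3) :
    ¬ ∃ A : Finset (Sym2 V), A.card ≤ k ∧ PawFree (edit G A) ∧
      IsCM3 ((edit G A).induce ((edit G A).connectedComponentMk x).supp) := by
  classical
  rintro ⟨A, hAcard, -, hcm3⟩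
  set H := edit G A with hH
  set C := H.connectedComponentMk x with hC
  obtain ⟨part, hpart, -⟩ := hcm3
  -- touched vertices
  set touched : Finset V := A.biUnion (fun e => {e.out.1, e.out.2}) with htouched
  have htcard : touched.card ≤ 2 * k := by
    calc touched.card ≤ ∑ e ∈ A, ({e.out.1, e.out.2} : Finset V).card :=
          Finset.card_biUnion_le
      _ ≤ ∑ _e ∈ A, 2 := Finset.sum_le_sum (fun e _ => (Finset.card_insert_le _ _).trans (by simp))
      _ = A.card * 2 := by simp [Finset.sum_const, Nat.smul_one_eq_cast, mul_comm]
      _ ≤ 2 * k := by omega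
  have huntouched : ∀ a ∉ touched, ∀ e ∈ A, a ∉ e := by
    intro a ha e he hmem
    apply ha
    refine Finset.mem_biUnion.2 ⟨e, he, ?_⟩
    have he2 : s(e.out.1, e.out.2) = e := Quot.out_eq e
    rw [← he2, Sym2.mem_iff] at hmem
    simpa using hmem
  set U : Finset V := T \ touched with hU
  have hUcard : 2 * k + 6 ≤ U.card := by
    show 2 * k + 6 ≤ (T \ touched).card
    have := Finset.card_le_card_sdiff_add_card (s := T) (t := touched)
    omega
  have hUT : ∀ a ∈ U, a ∈ T := fun a ha => (Finset.mem_sdiff.1 ha).1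
  have hUun : ∀ a ∈ U, ∀ e ∈ A, a ∉ e := fun a ha =>
    huntouched a (Finset.mem_sdiff.1 ha).2
  -- untouched vertices keep their G-adjacencies
  have hGH : ∀ a ∈ U, ∀ w, (H.Adj a w ↔ G.Adj a w) := fun a ha w =>
    edit_adj_of_untouched G A (hUun a ha)
  -- every vertex of U is in the component of x
  have hsupp : ∀ a ∈ U, a ∈ C.supp := by
    intro a ha
    have hadj : H.Adj a x := (hGH a ha x).2 (hTnbr a (hUT a ha)).symm
    exact (ConnectedComponent.mem_supp_iff _ _).2 (ConnectedComponent.sound hadj.reachable)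
  -- adjacency in H for supp vertices is governed by part
  have hpart' : ∀ a (ha : a ∈ C.supp) w (hw : w ∈ C.supp),
      (H.Adj a w ↔ part ⟨a, ha⟩ ≠ part ⟨w, hw⟩) := by
    intro a ha w hw
    have := hpart ⟨a, ha⟩ ⟨w, hw⟩
    simpa [comap_adj] using this
  have hsuppAdj : ∀ a ∈ C.supp, ∀ w, H.Adj a w → w ∈ C.supp := by
    intro a ha w hadj
    have : H.connectedComponentMk a = C := (ConnectedComponent.mem_supp_iff _ _).1 ha
    exact (ConnectedComponent.mem_supp_iff _ _).2
      ((ConnectedComponent.sound hadj.symm.reachable).trans this)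
  -- the part function restricted to U
  set f : {u // u ∈ U} → ↥C.supp := fun u => part ⟨u.1, hsupp u.1 u.2⟩ with hf
  set B := U.attach.image f with hB
  -- at most two parts among U
  have hB2 : B.card ≤ 2 := by
    by_contra hcon
    obtain ⟨pa, pb, pc, hpa, hpb, hpc, hab, hac, hbc⟩ :=
      Finset.two_lt_card_iff.1 (show 2 < B.card by omega)
    obtain ⟨⟨a, haU⟩, -, rfl⟩ := Finset.mem_image.1 hpa
    obtain ⟨⟨b, hbU⟩, -, rfl⟩ := Finset.mem_image.1 hpb
    obtain ⟨⟨c, hcU⟩, -, rfl⟩ := Finset.mem_image.1 hpc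
    have hHab : G.Adj a b :=
      (hGH a haU b).1 ((hpart' a _ b (hsupp b hbU)).2 hab)
    have hHac : G.Adj a c :=
      (hGH a haU c).1 ((hpart' a _ c (hsupp c hcU)).2 hac)
    have hHbc : G.Adj b c :=
      (hGH b hbU c).1 ((hpart' b _ c (hsupp c hcU)).2 hbc)
    refine hTfree {⟨a, hUT a haU⟩, ⟨b, hUT b hbU⟩, ⟨c, hUT c hcU⟩} ?_
    rw [is3Clique_triple_iff]
    exact ⟨hHab, hHac, hHbc⟩
  -- pigeonhole: some part contains k+3 vertices of U
  have hBne : B.Nonempty := by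
    refine Finset.Nonempty.image ?_ f
    rw [Finset.attach_nonempty_iff, ← Finset.card_pos]
    omega
  have hmaps : ∀ u ∈ U.attach, f u ∈ B := fun u hu => Finset.mem_image_of_mem f hu
  have hn : B.card * (k + 3) ≤ U.attach.card := by
    rw [Finset.card_attach]
    exact le_trans (Nat.mul_le_mul_right _ hB2) (by omega)
  obtain ⟨y, -, hy⟩ := Finset.exists_le_card_fiber_of_mul_le_card_of_maps_to hmaps hBne hn
  set Xs := {u ∈ U.attach | f u = y} with hXs
  set X : Finset V := Xs.image Subtype.val with hX
  have hXcard : k + 3 ≤ X.card := by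
    rwa [hX, Finset.card_image_of_injective _ Subtype.val_injective]
  have hXmem : ∀ a ∈ X, ∃ haU : a ∈ U, part ⟨a, hsupp a haU⟩ = y := by
    intro a ha
    obtain ⟨⟨a', ha'⟩, hmem, rfl⟩ := Finset.mem_image.1 ha
    exact ⟨ha', (Finset.mem_filter.1 hmem).2⟩
  -- the k+3 vertices are pairwise nonadjacent false twins in G
  refine htwinfree X hXcard ?_ ?_
  · intro a ha b hb hne hadj
    obtain ⟨haU, hay⟩ := hXmem a ha
    obtain ⟨hbU, hby⟩ := hXmem b hb
    have : H.Adj a b := (hGH a haU b).2 hadj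
    exact (hpart' a (hsupp a haU) b (hsupp b hbU)).1 this (hay.trans hby.symm)
  · intro a ha b hb
    obtain ⟨haU, hay⟩ := hXmem a ha
    obtain ⟨hbU, hby⟩ := hXmem b hb
    have main : ∀ c (hcU : c ∈ U), part ⟨c, hsupp c hcU⟩ = y →
        ∀ d (hdU : d ∈ U), part ⟨d, hsupp d hdU⟩ = y →
        ∀ w, G.Adj c w → G.Adj d w := by
      intro c hcU hcy d hdU hdy w hadj
      have hHcw : H.Adj c w := (hGH c hcU w).2 hadj
      have hwsupp : w ∈ C.supp := hsuppAdj c (hsupp c hcU) w hHcw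
      have hne : part ⟨c, hsupp c hcU⟩ ≠ part ⟨w, hwsupp⟩ :=
        (hpart' c _ w hwsupp).1 hHcw
      have hne2 : part ⟨d, hsupp d hdU⟩ ≠ part ⟨w, hwsupp⟩ := by
        rw [hdy, ← hcy]; exact hne
      exact (hGH d hdU w).1 ((hpart' d _ w hwsupp).2 hne2)
    ext w
    simp only [mem_neighborSet]
    exact ⟨main a haU hay b hbU hby w, main b hbU hby a haU hay w⟩
end

section
/- Let G be a graph, S ⊆ V(G) such that every induced paw of G has an edge with both endpoints in S. Let C be a triangle-free connected component of G - S, let s ∈ S, and suppose x, y ∈ C are adjacent to each other and both adjacent to s (so x, y, s form a triangle). Then every vertex of the connected component C is adjacent to s. -/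
open SimpleGraph

private theorem inj_aux_15 {V : Type*} (s u v t : V)
    (hsu : s ≠ u) (hsv : s ≠ v) (hst : s ≠ t)
    (huv : u ≠ v) (hut : u ≠ t) (hvt : v ≠ t) :
    Function.Injective ![s, v, u, t] := by
  intro a b hab
  fin_cases a <;> fin_cases b <;> simp_all

private theorem paw_aux_15 {V : Type*} (G : SimpleGraph V) (s u v t : V)
    (hsv : G.Adj s v) (hsu : G.Adj s u) (huv : G.Adj u v) (hut : G.Adj u t)
    (hnst : ¬ G.Adj s t) (hnvt : ¬ G.Adj v t) :
    ∀ a b : Fin 4, paw.Adj a b ↔ G.Adj (![s, v, u, t] a) (![s, v, u, t] b) := by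
  intro a b
  fin_cases a <;> fin_cases b <;>
    simp only [paw, SimpleGraph.fromEdgeSet_adj, Set.mem_insert_iff,
      Set.mem_singleton_iff, Sym2.eq_iff, Matrix.cons_val_zero, Matrix.cons_val_one,
      Matrix.head_cons, Matrix.cons_val_two, Matrix.tail_cons, Matrix.cons_val_three,
      Matrix.cons_val_fin_one, Fin.isValue] <;>
    (try simp [G.irrefl]) <;>
    first
      | exact hsv | exact hsu | exact hsv.symm | exact hsu.symm
      | exact huv | exact huv.symm | exact hut | exact hut.symm
      | exact hnst | exact fun h => hnst h.symm
      | exact hnvt | exact fun h => hnvt h.symm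

/-- If every induced paw of `G` has an edge inside `S`, `C` is a triangle-free component
of `G - S`, `s ∈ S`, and `x, y ∈ C` form a triangle with `s`, then every vertex of `C`
is adjacent to `s`. -/
theorem statement_15 {V : Type*} (G : SimpleGraph V) (S : Set V)
    (hS : ∀ f : Fin 4 ↪ V, (∀ a b : Fin 4, paw.Adj a b ↔ G.Adj (f a) (f b)) →
      ∃ a b : Fin 4, paw.Adj a b ∧ f a ∈ S ∧ f b ∈ S)
    (c : (G.induce Sᶜ).ConnectedComponent)
    (htf : ((G.induce Sᶜ).induce c.supp).CliqueFree 3)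
    (s : V) (hs : s ∈ S)
    (x y : ↥Sᶜ) (hxC : x ∈ c.supp) (hyC : y ∈ c.supp)
    (hxy : G.Adj ↑x ↑y) (hsx : G.Adj s ↑x) (hsy : G.Adj s ↑y) :
    ∀ t : ↥Sᶜ, t ∈ c.supp → G.Adj s ↑t := by
  classical
  -- triangle-freeness restated
  have tf : ∀ (a b d : ↥Sᶜ), a ∈ c.supp → b ∈ c.supp → d ∈ c.supp →
      G.Adj ↑a ↑b → G.Adj ↑a ↑d → G.Adj ↑b ↑d → False := by
    intro a b d ha hb hd hab had hbd
    refine htf {⟨a, ha⟩, ⟨b, hb⟩, ⟨d, hd⟩}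
      (SimpleGraph.is3Clique_triple_iff.mpr ⟨?_, ?_, ?_⟩) <;>
      simp only [comap_adj, Function.Embedding.coe_subtype] <;> assumption
  -- propagation key lemma
  have key : ∀ u v : ↥Sᶜ, u ∈ c.supp → v ∈ c.supp → G.Adj ↑u ↑v →
      G.Adj s ↑u → G.Adj s ↑v → ∀ t : ↥Sᶜ, G.Adj ↑u ↑t → G.Adj s ↑t := by
    intro u v hu hv huv hsu hsv t hut
    have hut' : (G.induce Sᶜ).Adj u t := by
      simp only [comap_adj, Function.Embedding.coe_subtype]; exact hut
    have htC : t ∈ c.supp := by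
      rw [SimpleGraph.ConnectedComponent.mem_supp_iff] at hu ⊢
      rw [← hu]
      exact SimpleGraph.ConnectedComponent.connectedComponentMk_eq_of_adj hut'.symm
    by_cases htv : t = v
    · subst htv; exact hsv
    by_contra hnst
    have hnvt : ¬ G.Adj ↑v ↑t := fun h => tf u v t hu hv htC huv hut h
    have hinj : Function.Injective ![s, ↑v, ↑u, ↑t] :=
      inj_aux_15 s ↑u ↑v ↑t (fun h => u.2 (h ▸ hs)) (fun h => v.2 (h ▸ hs))
        (fun h => t.2 (h ▸ hs)) huv.ne hut.ne
        (fun h => htv (Subtype.coe_injective h.symm))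
    obtain ⟨a, b, hpaw, haS, hbS⟩ := hS ⟨![s, ↑v, ↑u, ↑t], hinj⟩
      (paw_aux_15 G s ↑u ↑v ↑t hsv hsu huv hut hnst hnvt)
    simp only [Function.Embedding.coeFn_mk] at haS hbS
    have hmem : ∀ i : Fin 4, i ≠ 0 → ![s, (↑v : V), ↑u, ↑t] i ∉ S := by
      intro i hi
      fin_cases i
      · exact absurd rfl hi
      · exact v.2
      · exact u.2
      · exact t.2
    rcases eq_or_ne a 0 with ha0 | ha0
    · rcases eq_or_ne b 0 with hb0 | hb0
      · rw [ha0, hb0] at hpaw; exact paw.irrefl hpaw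
      · exact hmem b hb0 hbS
    · exact hmem a ha0 haS
  -- now propagate along walks
  have main : ∀ (w z : ↥Sᶜ), (G.induce Sᶜ).Walk w z → w ∈ c.supp →
      G.Adj s ↑w → (∃ v' : ↥Sᶜ, v' ∈ c.supp ∧ G.Adj ↑w ↑v' ∧ G.Adj s ↑v') →
      G.Adj s ↑z := by
    intro w z p
    induction p with
    | nil => intro _ h _; exact h
    | @cons w' b z' h q ih =>
        rintro hw hsw ⟨v', hv'C, hwv', hsv'⟩
        have hwb : G.Adj ↑w' ↑b := by
          simpa only [comap_adj, Function.Embedding.coe_subtype] using h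
        have hbC : b ∈ c.supp := by
          rw [SimpleGraph.ConnectedComponent.mem_supp_iff] at hw ⊢
          rw [← hw]
          exact SimpleGraph.ConnectedComponent.connectedComponentMk_eq_of_adj h.symm
        have hsb : G.Adj s ↑b := key w' v' hw hv'C hwv' hsw hsv' b hwb
        exact ih hbC hsb ⟨w', hw, hwb.symm, hsw⟩
  intro t htC
  have hreach : (G.induce Sᶜ).Reachable x t := by
    rw [SimpleGraph.ConnectedComponent.mem_supp_iff] at hxC htC
    exact SimpleGraph.ConnectedComponent.exact (hxC.trans htC.symm)
  obtain ⟨p⟩ := hreach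
  exact main x t p hxC hsx ⟨y, hyC, hxy, hsy⟩
end

section
/- Let G be a graph and S the vertex set of a maximal edge-disjoint packing of at most k induced paws in G (so |S| ≤ 4k, and every induced paw of G shares an edge with the packing, hence has an edge with both endpoints in S). Let s ∈ S be a vertex adjacent to some triangle-free component C of G - S via a triangle (there are x, y ∈ C with x, y, s pairwise adjacent). Then s has no neighbor in any connected component of G - S other than C. -/
open SimpleGraph

/-- If every induced paw of `G` has an edge inside `S` and `s ∈ S` forms a triangle with
two vertices of a triangle-free component `C` of `G - S`, then `s` has no neighbor in
any other component of `G - S`. -/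
theorem statement_16 {V : Type*} (G : SimpleGraph V) (S : Set V)
    (hS : ∀ f : Fin 4 ↪ V, (∀ a b : Fin 4, paw.Adj a b ↔ G.Adj (f a) (f b)) →
      ∃ a b : Fin 4, paw.Adj a b ∧ f a ∈ S ∧ f b ∈ S)
    (c : (G.induce Sᶜ).ConnectedComponent)
    (htf : ((G.induce Sᶜ).induce c.supp).CliqueFree 3)
    (s : V) (hs : s ∈ S)
    (x y : ↥Sᶜ) (hxC : x ∈ c.supp) (hyC : y ∈ c.supp)
    (hxy : G.Adj ↑x ↑y) (hsx : G.Adj s ↑x) (hsy : G.Adj s ↑y) :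
    ∀ c₂ : (G.induce Sᶜ).ConnectedComponent, c₂ ≠ c →
      ∀ v : ↥Sᶜ, v ∈ c₂.supp → ¬ G.Adj s ↑v := by
  intro c₂ hc₂ v hvC hadj
  have hxc : (G.induce Sᶜ).connectedComponentMk x = c := hxC
  have hyc : (G.induce Sᶜ).connectedComponentMk y = c := hyC
  have hvc : (G.induce Sᶜ).connectedComponentMk v = c₂ := hvC
  have hxv : ¬ G.Adj ↑x ↑v := by
    intro h
    have h' : (G.induce Sᶜ).Adj x v := by simpa using h
    exact hc₂ (hvc ▸ ((ConnectedComponent.sound h'.reachable.symm).trans hxc))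
  have hyv : ¬ G.Adj ↑y ↑v := by
    intro h
    have h' : (G.induce Sᶜ).Adj y v := by simpa using h
    exact hc₂ (hvc ▸ ((ConnectedComponent.sound h'.reachable.symm).trans hyc))
  have hxs : (x : V) ≠ s := fun h => x.2 (h ▸ hs)
  have hys : (y : V) ≠ s := fun h => y.2 (h ▸ hs)
  have hvs : (v : V) ≠ s := fun h => v.2 (h ▸ hs)
  have hxyne : (x : V) ≠ y := hxy.ne
  have hxvne : (x : V) ≠ v := by
    intro h
    exact hc₂ (by rw [← hvc, ← Subtype.ext h, hxc])
  have hyvne : (y : V) ≠ v := by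
    intro h
    exact hc₂ (by rw [← hvc, ← Subtype.ext h, hyc])
  have hinj : Function.Injective (![↑x, ↑y, s, ↑v] : Fin 4 → V) := by
    intro a b h
    fin_cases a <;> fin_cases b <;>
      first
        | rfl
        | exact absurd h hxyne | exact absurd h hxyne.symm
        | exact absurd h hxs | exact absurd h hxs.symm
        | exact absurd h hys | exact absurd h hys.symm
        | exact absurd h hvs | exact absurd h hvs.symm
        | exact absurd h hxvne | exact absurd h hxvne.symm
        | exact absurd h hyvne | exact absurd h hyvne.symm
        | exact absurd h.symm hxs | exact absurd h.symm hys
        | exact absurd h.symm hvs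
  have hiff : ∀ a b : Fin 4, paw.Adj a b ↔ G.Adj (![↑x, ↑y, s, ↑v] a) (![↑x, ↑y, s, ↑v] b) := by
    intro a b
    fin_cases a <;> fin_cases b <;>
      simp [paw] <;>
      first
        | exact hxy | exact hxy.symm | exact hsx | exact hsx.symm
        | exact hsy | exact hsy.symm | exact hadj | exact hadj.symm
        | exact hxv | exact fun h => hxv h.symm
        | exact hyv | exact fun h => hyv h.symm
        | exact G.irrefl
  obtain ⟨a, b, hab, haS, hbS⟩ := hS ⟨![↑x, ↑y, s, ↑v], hinj⟩ hiff
  have hnotS : ∀ i : Fin 4, (![↑x, ↑y, s, ↑v] : Fin 4 → V) i ∈ S → i = 2 := by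
    intro i hiS
    fin_cases i
    · exact absurd hiS x.2
    · exact absurd hiS y.2
    · rfl
    · exact absurd hiS v.2
  rw [hnotS a haS, hnotS b hbS] at hab
  exact paw.irrefl hab
end
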